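/- (Characterization C4 of GLS.) A formula φ is a theorem of the Hilbert system GLS if and only if for every GL-model ⟨W,R,V⟩ and every infinitely descending sequence w₁ R⁻¹ w₂ R⁻¹ w₃ ⋯ in W there is a number i such that V(w_i, φ) = true. -/

import Mathlib

/-- Modal formulas: propositional variables, ⊥, →, □. -/
inductive Formula : Type
  | var : ℕ → Formula
  | bot : Formula
  | imp : Formula → Formula → Formula
  | box : Formula → Formula
deriving DecidableEq

/-- Levels of sequents in GLS_seq: first level (⇒) and second level (⇛). -/
inductive SeqLevel : Type
  | one
  | two
deriving DecidableEq

/-- The set of subformulas of a formula. -/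
def Formula.subf : Formula → Finset Formula
  | .var p => {.var p}
  | .bot => {.bot}
  | .imp φ ψ => insert (.imp φ ψ) (φ.subf ∪ ψ.subf)
  | .box φ => insert (.box φ) φ.subf

/-- SF(Ψ,Φ): all subformulas of formulas in Ψ ∪ Φ. -/
def SF (Ψ Φ : Finset Formula) : Finset Formula := (Ψ ∪ Φ).biUnion Formula.subf

def Formula.isBox : Formula → Bool
  | .box _ => true
  | _ => false

def Formula.unbox : Formula → Formula
  | .box φ => φ
  | φ => φ

/-- Θ_□ = {φ : □φ ∈ Θ}. -/
def boxInv (Θ : Finset Formula) : Finset Formula :=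
  (Θ.filter fun ψ => ψ.isBox).image Formula.unbox

/-- The sequent calculus GLS_seq, on sequents of two levels.  The Bool parameter
records whether the cut rule may be used: `GLSSeq true` is provability in GLS_seq,
`GLSSeq false` is cut-free provability.  The first-level fragment is exactly GL_seq. -/
inductive GLSSeq : Bool → SeqLevel → Finset Formula → Finset Formula → Prop
  | init (c lv φ) : GLSSeq c lv {φ} {φ}
  | initBot (c lv) : GLSSeq c lv {Formula.bot} ∅
  | cut {lv Γ Δ} (φ) : GLSSeq true lv Γ (insert φ Δ) → GLSSeq true lv (insert φ Γ) Δ →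
      GLSSeq true lv Γ Δ
  | weak {c lv Γ Δ Γ' Δ'} : Γ ⊆ Γ' → Δ ⊆ Δ' → GLSSeq c lv Γ Δ → GLSSeq c lv Γ' Δ'
  | impL {c lv Γ Δ φ ψ} : GLSSeq c lv Γ (insert φ Δ) → GLSSeq c lv (insert ψ Γ) Δ →
      GLSSeq c lv (insert (.imp φ ψ) Γ) Δ
  | impR {c lv Γ Δ φ ψ} : GLSSeq c lv (insert φ Γ) (insert ψ Δ) →
      GLSSeq c lv Γ (insert (.imp φ ψ) Δ)
  | boxGL {c Γ φ} : GLSSeq c .one (Γ ∪ Γ.image .box ∪ {.box φ}) {φ} →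
      GLSSeq c .one (Γ.image .box) {.box φ}
  | boxL {c Γ Δ} (φ) : GLSSeq c .two (insert φ Γ) Δ → GLSSeq c .two (insert (.box φ) Γ) Δ
  | lift {c Γ Δ} : GLSSeq c .one Γ Δ → GLSSeq c .two Γ Δ

/-- The sequent calculus GL_seq (on first-level sequents only). -/
inductive GLSeq : Bool → Finset Formula → Finset Formula → Prop
  | init (c φ) : GLSeq c {φ} {φ}
  | initBot (c) : GLSeq c {Formula.bot} ∅
  | cut {Γ Δ} (φ) : GLSeq true Γ (insert φ Δ) → GLSeq true (insert φ Γ) Δ → GLSeq true Γ Δ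
  | weak {c Γ Δ Γ' Δ'} : Γ ⊆ Γ' → Δ ⊆ Δ' → GLSeq c Γ Δ → GLSeq c Γ' Δ'
  | impL {c Γ Δ φ ψ} : GLSeq c Γ (insert φ Δ) → GLSeq c (insert ψ Γ) Δ →
      GLSeq c (insert (.imp φ ψ) Γ) Δ
  | impR {c Γ Δ φ ψ} : GLSeq c (insert φ Γ) (insert ψ Δ) → GLSeq c Γ (insert (.imp φ ψ) Δ)
  | boxGL {c Γ φ} : GLSeq c (Γ ∪ Γ.image .box ∪ {.box φ}) {φ} → GLSeq c (Γ.image .box) {.box φ}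

/-- Proof trees of GLS_seq (cut included). -/
inductive GLSTree : SeqLevel → Finset Formula → Finset Formula → Type
  | init (lv φ) : GLSTree lv {φ} {φ}
  | initBot (lv) : GLSTree lv {Formula.bot} ∅
  | cut {lv Γ Δ} (φ) : GLSTree lv Γ (insert φ Δ) → GLSTree lv (insert φ Γ) Δ → GLSTree lv Γ Δ
  | weak {lv Γ Δ} (Γ' Δ' : Finset Formula) : Γ ⊆ Γ' → Δ ⊆ Δ' → GLSTree lv Γ Δ → GLSTree lv Γ' Δ'
  | impL {lv Γ Δ} (φ ψ) : GLSTree lv Γ (insert φ Δ) → GLSTree lv (insert ψ Γ) Δ →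
      GLSTree lv (insert (.imp φ ψ) Γ) Δ
  | impR {lv Γ Δ} (φ ψ) : GLSTree lv (insert φ Γ) (insert ψ Δ) → GLSTree lv Γ (insert (.imp φ ψ) Δ)
  | boxGL (Γ φ) : GLSTree .one (Γ ∪ Γ.image .box ∪ {.box φ}) {φ} → GLSTree .one (Γ.image .box) {.box φ}
  | boxL {Γ Δ} (φ) : GLSTree .two (insert φ Γ) Δ → GLSTree .two (insert (.box φ) Γ) Δ
  | lift {Γ Δ} : GLSTree .one Γ Δ → GLSTree .two Γ Δ

/-- The set of principal formulas of all (□L) rules occurring in a proof tree. -/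
def GLSTree.principals : ∀ {lv Γ Δ}, GLSTree lv Γ Δ → Finset Formula
  | _, _, _, .init _ _ => ∅
  | _, _, _, .initBot _ => ∅
  | _, _, _, .cut _ t₁ t₂ => t₁.principals ∪ t₂.principals
  | _, _, _, .weak _ _ _ _ t => t.principals
  | _, _, _, .impL _ _ t₁ t₂ => t₁.principals ∪ t₂.principals
  | _, _, _, .impR _ _ t => t.principals
  | _, _, _, .boxGL _ _ t => t.principals
  | _, _, _, .boxL φ t => insert (Formula.box φ) t.principals
  | _, _, _, .lift t => t.principals

/-- A proof tree bundled with its level and conclusion. -/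
abbrev PGLSTree : Type :=
  (lv : SeqLevel) × (Γ : Finset Formula) × (Δ : Finset Formula) × GLSTree lv Γ Δ

/-- The set of subproofs of a proof tree (including the tree itself). -/
def GLSTree.subproofs {lv Γ Δ} (t : GLSTree lv Γ Δ) : Set PGLSTree :=
  insert ⟨lv, Γ, Δ, t⟩ <|
    match lv, Γ, Δ, t with
    | _, _, _, .init _ _ => ∅
    | _, _, _, .initBot _ => ∅
    | _, _, _, .cut _ t₁ t₂ => t₁.subproofs ∪ t₂.subproofs
    | _, _, _, .weak _ _ _ _ t₁ => t₁.subproofs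
    | _, _, _, .impL _ _ t₁ t₂ => t₁.subproofs ∪ t₂.subproofs
    | _, _, _, .impR _ _ t₁ => t₁.subproofs
    | _, _, _, .boxGL _ _ t₁ => t₁.subproofs
    | _, _, _, .boxL _ t₁ => t₁.subproofs
    | _, _, _, .lift t₁ => t₁.subproofs

/-- Kripke satisfaction over a frame `R` with atomic valuation `v`. -/
def KSat {W : Type} (R : W → W → Prop) (v : W → ℕ → Prop) : Formula → W → Prop
  | .var p, w => v w p
  | .bot, _ => False
  | .imp φ ψ, w => KSat R v φ w → KSat R v ψ w
  | .box φ, w => ∀ w', R w w' → KSat R v φ w'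

/-- A GL-model: a nonempty, transitive, converse well-founded Kripke model. -/
structure GLModel where
  World : Type
  ne : Nonempty World
  R : World → World → Prop
  trans : Transitive R
  cwf : ∀ f : ℕ → World, ¬ ∀ i, R (f i) (f (i + 1))
  val : World → ℕ → Prop

/-- Truth of a formula at a world of a GL-model. -/
def GLModel.sat (M : GLModel) (w : M.World) (φ : Formula) : Prop := KSat M.R M.val φ w

/-- Truth of a sequent Γ ▸ Δ at a world: some γ ∈ Γ is false or some δ ∈ Δ is true. -/
def GLModel.seqTrue (M : GLModel) (w : M.World) (Γ Δ : Finset Formula) : Prop :=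
  (∃ γ ∈ Γ, ¬ M.sat w γ) ∨ (∃ δ ∈ Δ, M.sat w δ)

/-- w is Σ-reflexive: □α → α is true at w for every □α ∈ Σ. -/
def GLModel.reflexiveFor (M : GLModel) (w : M.World) (S : Finset Formula) : Prop :=
  ∀ α : Formula, Formula.box α ∈ S → M.sat w ((Formula.box α).imp α)

/-- Saturation conditions (→L), (→R) for first-level sequents. -/
def Saturated1 (Γ Δ : Finset Formula) : Prop :=
  (∀ φ ψ : Formula, φ.imp ψ ∈ Γ → φ ∈ Δ ∨ ψ ∈ Γ) ∧
  (∀ φ ψ : Formula, φ.imp ψ ∈ Δ → φ ∈ Γ ∧ ψ ∈ Δ)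

/-- Saturation for second-level sequents: additionally (□L). -/
def Saturated2 (Γ Δ : Finset Formula) : Prop :=
  Saturated1 Γ Δ ∧ ∀ φ : Formula, Formula.box φ ∈ Γ → φ ∈ Γ

def Saturated : SeqLevel → Finset Formula → Finset Formula → Prop
  | .one => Saturated1
  | .two => Saturated2

/-- The Hilbert system GL. -/
inductive GLHilbert : Formula → Prop
  | ax1 (φ ψ : Formula) : GLHilbert (φ.imp (ψ.imp φ))
  | ax2 (φ ψ χ : Formula) :
      GLHilbert ((φ.imp (ψ.imp χ)).imp ((φ.imp ψ).imp (φ.imp χ)))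
  | ax3 (φ : Formula) : GLHilbert (((φ.imp .bot).imp .bot).imp φ)
  | axK (φ ψ : Formula) :
      GLHilbert ((Formula.box (φ.imp ψ)).imp ((Formula.box φ).imp (Formula.box ψ)))
  | axLob (φ : Formula) :
      GLHilbert ((Formula.box ((Formula.box φ).imp φ)).imp (Formula.box φ))
  | mp {φ ψ} : GLHilbert (φ.imp ψ) → GLHilbert φ → GLHilbert ψ
  | nec {φ} : GLHilbert φ → GLHilbert (Formula.box φ)

/-- The Hilbert system GLS: theorems of GL and all □α → α, closed under modus ponens. -/
inductive GLSHilbert : Formula → Prop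
  | gl {φ} : GLHilbert φ → GLSHilbert φ
  | refl (α : Formula) : GLSHilbert ((Formula.box α).imp α)
  | mp {φ ψ} : GLSHilbert (φ.imp ψ) → GLSHilbert φ → GLSHilbert ψ

/-- Conjunction (encoded with → and ⊥) of a list of formulas; empty conjunction is ⊤. -/
def Formula.conj : List Formula → Formula
  | [] => Formula.bot.imp Formula.bot
  | φ :: l => ((φ.imp ((Formula.conj l).imp .bot)).imp .bot)

/-- Membership predicate for the canonical model: saturated first-level sequents over S
that are not cut-free provable in GLS_seq. -/
def W0pred (S : Finset Formula) (s : Finset Formula × Finset Formula) : Prop :=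
  Saturated1 s.1 s.2 ∧ ¬ GLSSeq false SeqLevel.one s.1 s.2 ∧ s.1 ∪ s.2 ⊆ S

/-- Worlds of the canonical model. -/
def W0 (S : Finset Formula) : Type := {s : Finset Formula × Finset Formula // W0pred S s}

/-- Accessibility of the canonical model: (Γ⇒Δ) R₀ (Γ'⇒Δ') iff Γ_□ ⊊ Γ'_□ and Γ_□ ⊆ Γ'. -/
def R0 (S : Finset Formula) (s t : W0 S) : Prop :=
  boxInv s.1.1 ⊂ boxInv t.1.1 ∧ boxInv s.1.1 ⊆ t.1.1

/-- Valuation of the canonical model: p is true at (Γ⇒Δ) iff p ∈ Γ. -/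
def V0 (S : Finset Formula) (s : W0 S) (p : ℕ) : Prop := Formula.var p ∈ s.1.1

/-- The extended set of worlds W = W₀ ∪ ℕ. -/
def Wext (S : Finset Formula) : Type := W0 S ⊕ ℕ

/-- The extended accessibility relation, with distinguished world `wp` in W₀. -/
def Rext (S : Finset Formula) (wp : W0 S) : Wext S → Wext S → Prop
  | Sum.inl x, Sum.inl y => R0 S x y
  | Sum.inr _, Sum.inl y => y = wp ∨ R0 S wp y
  | Sum.inr n, Sum.inr m => m < n
  | Sum.inl _, Sum.inr _ => False

/-- The extended valuation: worlds in ℕ behave like the distinguished world `wp`. -/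
def Vext (S : Finset Formula) (wp : W0 S) : Wext S → ℕ → Prop
  | Sum.inl x, p => V0 S x p
  | Sum.inr _, p => V0 S wp p

/-!
A GLS theorem fails at only finitely many worlds of a descending chain: theorems of GL hold
everywhere, and `□α → α` fails at most once, since `□α` at a later world of the chain forces `α`
at all earlier ones.

Conversely, if `φ` is not a GLS theorem then, translating sequent proofs into Hilbert
derivations, the sequent `⇛ φ` is unprovable and extends to a saturated unprovable second-level
sequent `Γ ⇛ Δ` over the subformulas of `φ`. Add to the finite canonical GL-model of saturated
unprovable first-level sequents an `ℕ`-indexed chain of copies of `Γ ⇛ Δ`, copy `n` seeing the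
copies `m < n`, `Γ ⇛ Δ` itself and its canonical successors. As `Γ` is closed under `□α ↦ α`,
the truth lemma holds at the copies, so `φ ∈ Δ` fails all along the chain.
-/

/-- `B` is a set of theorems and modus ponens the only rule, so necessitation never applies to
the hypotheses `s` and the deduction theorem holds. -/
inductive HDer (B : Formula → Prop) : Set Formula → Formula → Prop
  | ax {s φ} : B φ → HDer B s φ
  | hyp {s φ} : φ ∈ s → HDer B s φ
  | mp {s φ ψ} : HDer B s (φ.imp ψ) → HDer B s φ → HDer B s ψ

theorem GLHilbert.imp_self (φ : Formula) : GLHilbert (φ.imp φ) :=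
  .mp (.mp (.ax2 φ (φ.imp φ) φ) (.ax1 φ (φ.imp φ))) (.ax1 φ φ)

namespace HDer

variable {B : Formula → Prop} {s t : Set Formula} {φ ψ χ : Formula}

theorem mono (hst : s ⊆ t) (h : HDer B s φ) : HDer B t φ := by
  induction h with
  | ax h => exact .ax h
  | hyp h => exact .hyp (hst h)
  | mp _ _ ih₁ ih₂ => exact .mp ih₁ ih₂

theorem map_base {B' : Formula → Prop} (hB : ∀ ψ, B ψ → B' ψ) (h : HDer B s φ) :
    HDer B' s φ := by
  induction h with
  | ax h => exact .ax (hB _ h)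
  | hyp h => exact .hyp h
  | mp _ _ ih₁ ih₂ => exact .mp ih₁ ih₂

theorem base_of_empty (hmp : ∀ {φ ψ}, B (φ.imp ψ) → B φ → B ψ) (h : HDer B ∅ φ) : B φ := by
  induction h with
  | ax h => exact h
  | hyp h => exact h.elim
  | mp _ _ ih₁ ih₂ => exact hmp ih₁ ih₂

theorem imp_intro (hB : ∀ ψ, GLHilbert ψ → B ψ) (h : HDer B (insert φ s) χ) :
    HDer B s (φ.imp χ) := by
  suffices ∀ t, HDer B t χ → t ⊆ insert φ s → HDer B s (φ.imp χ) from this _ h subset_rfl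
  clear h
  intro t h
  induction h with
  | ax h => exact fun _ => .mp (.ax (hB _ (.ax1 _ _))) (.ax h)
  | hyp h =>
    intro hsub
    rcases hsub h with rfl | h
    · exact .ax (hB _ (GLHilbert.imp_self _))
    · exact .mp (.ax (hB _ (.ax1 _ _))) (.hyp h)
  | mp _ _ ih₁ ih₂ =>
    exact fun hsub => .mp (.mp (.ax (hB _ (.ax2 _ _ _))) (ih₁ hsub)) (ih₂ hsub)

theorem of_not_not (hB : ∀ ψ, GLHilbert ψ → B ψ) (h : HDer B s ((φ.imp .bot).imp .bot)) :
    HDer B s φ :=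
  .mp (.ax (hB _ (.ax3 φ))) h

theorem of_bot (hB : ∀ ψ, GLHilbert ψ → B ψ) (h : HDer B s .bot) : HDer B s φ :=
  of_not_not hB (.mp (.ax (hB _ (.ax1 .bot (φ.imp .bot)))) h)

theorem box_mp (h₁ : HDer GLHilbert s (φ.imp ψ).box) (h₂ : HDer GLHilbert s φ.box) :
    HDer GLHilbert s ψ.box :=
  .mp (.mp (.ax (.axK φ ψ)) h₁) h₂

theorem box_of_box_hyps {Θ : Finset Formula} (h : HDer GLHilbert ↑Θ χ)
    (hΘ : ∀ θ ∈ Θ, HDer GLHilbert s θ.box) : HDer GLHilbert s χ.box := by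
  classical
  induction Θ using Finset.induction_on generalizing χ with
  | empty =>
    rw [Finset.coe_empty] at h
    exact .ax (.nec (h.base_of_empty GLHilbert.mp))
  | insert a Θ _ ih =>
    rw [Finset.coe_insert] at h
    exact box_mp (ih (h.imp_intro fun _ => id) fun θ hθ => hΘ θ (by simp [hθ]))
      (hΘ a (by simp))

end HDer

theorem GLHilbert.four (a : Formula) : GLHilbert (a.box.imp a.box.box) := by
  -- Löb's axiom for `β`, which encodes `a ∧ □a`.
  set β := (a.imp (a.box.imp .bot)).imp .bot
  have hGL : ∀ ψ, GLHilbert ψ → GLHilbert ψ := fun _ => id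
  have fst : GLHilbert (β.imp a) := by
    refine HDer.base_of_empty GLHilbert.mp (.imp_intro hGL (.of_not_not hGL (.imp_intro hGL ?_)))
    refine .mp (φ := a.imp (a.box.imp .bot)) (.hyp (by simp [β])) (.imp_intro hGL ?_)
    exact .imp_intro hGL (.of_bot hGL (.mp (φ := a) (.hyp (by simp)) (.hyp (by simp))))
  have snd : GLHilbert (β.imp a.box) := by
    refine HDer.base_of_empty GLHilbert.mp (.imp_intro hGL (.of_not_not hGL (.imp_intro hGL ?_)))
    exact .mp (φ := a.imp (a.box.imp .bot)) (.hyp (by simp [β]))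
      (.imp_intro hGL (.hyp (by simp)))
  have pair : GLHilbert (a.imp (β.box.imp β)) := by
    refine HDer.base_of_empty GLHilbert.mp
      (.imp_intro hGL (.imp_intro hGL (.imp_intro hGL ?_)))
    exact .mp (φ := a.box) (.mp (φ := a) (.hyp (by simp)) (.hyp (by simp)))
      (.box_mp (.ax (.nec fst)) (.hyp (by simp)))
  refine HDer.base_of_empty GLHilbert.mp (.imp_intro hGL (s := ∅) ?_)
  exact .box_mp (.ax (.nec snd))
    (.mp (.ax (.axLob β)) (.box_mp (.ax (.nec pair)) (.hyp (by simp))))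

def SeqLevel.logic : SeqLevel → Formula → Prop
  | .one => GLHilbert
  | .two => GLSHilbert

theorem SeqLevel.logic_of_GLHilbert : ∀ (lv : SeqLevel) (ψ : Formula), GLHilbert ψ → lv.logic ψ
  | .one, _, h => h
  | .two, _, h => .gl h

def seqCtx (Γ Δ : Finset Formula) : Set Formula :=
  (Γ : Set Formula) ∪ (fun δ : Formula => δ.imp .bot) '' (Δ : Set Formula)

theorem seqCtx_insert_left (φ : Formula) (Γ Δ : Finset Formula) :
    seqCtx (insert φ Γ) Δ = insert φ (seqCtx Γ Δ) := by
  simp [seqCtx, Set.insert_union]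

theorem seqCtx_insert_right (φ : Formula) (Γ Δ : Finset Formula) :
    seqCtx Γ (insert φ Δ) = insert (φ.imp .bot) (seqCtx Γ Δ) := by
  simp [seqCtx, Set.image_insert_eq, Set.union_insert]

theorem seqCtx_mono {Γ Δ Γ' Δ' : Finset Formula} (hΓ : Γ ⊆ Γ') (hΔ : Δ ⊆ Δ') :
    seqCtx Γ Δ ⊆ seqCtx Γ' Δ' :=
  Set.union_subset_union (Finset.coe_subset.2 hΓ) (Set.image_mono (Finset.coe_subset.2 hΔ))

/-- By axiom 4 the context `□Γ` proves `□Γ` and `□□Γ`, so `Γ, □Γ ⊢ □φ → φ` can be boxed;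
Löb's axiom then gives `□φ`. -/
theorem HDer.boxGL {Γ : Finset Formula} {φ : Formula}
    (h : HDer GLHilbert (seqCtx (Γ ∪ Γ.image .box ∪ {φ.box}) {φ}) .bot) :
    HDer GLHilbert (seqCtx (Γ.image .box) {φ.box}) .bot := by
  classical
  have hGL : ∀ ψ, GLHilbert ψ → GLHilbert ψ := fun _ => id
  have hctx : seqCtx (Γ ∪ Γ.image .box ∪ {φ.box}) {φ} =
      insert (φ.imp .bot) (insert φ.box ↑(Γ ∪ Γ.image .box)) := by
    rw [show ({φ} : Finset Formula) = insert φ ∅ from rfl, seqCtx_insert_right,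
      Finset.union_comm, Finset.singleton_union, seqCtx_insert_left]
    simp [seqCtx]
  rw [hctx] at h
  have hlob : HDer GLHilbert ↑(Γ ∪ Γ.image .box) (φ.box.imp φ) :=
    .imp_intro hGL (.of_not_not hGL (.imp_intro hGL h))
  have hboxes : ∀ θ ∈ Γ ∪ Γ.image .box, HDer GLHilbert (seqCtx (Γ.image .box) {φ.box}) θ.box := by
    intro θ hθ
    rcases Finset.mem_union.1 hθ with hθ | hθ
    · exact .hyp (by simp [seqCtx, hθ])
    · obtain ⟨γ, hγ, rfl⟩ := Finset.mem_image.1 hθ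
      exact .mp (.ax (GLHilbert.four γ)) (.hyp (by simp [seqCtx, hγ]))
  exact .mp (.hyp (by simp [seqCtx]))
    (.mp (.ax (.axLob φ)) (HDer.box_of_box_hyps hlob hboxes))

theorem GLSSeq.hDer_bot {c : Bool} {lv : SeqLevel} {Γ Δ : Finset Formula}
    (h : GLSSeq c lv Γ Δ) : HDer lv.logic (seqCtx Γ Δ) .bot := by
  induction h with
  | init c lv φ => exact .mp (φ := φ) (.hyp (by simp [seqCtx])) (.hyp (by simp [seqCtx]))
  | initBot c lv => exact .hyp (by simp [seqCtx])
  | @cut lv Γ Δ φ _ _ ih₁ ih₂ =>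
    rw [seqCtx_insert_right] at ih₁
    rw [seqCtx_insert_left] at ih₂
    exact .mp (.imp_intro lv.logic_of_GLHilbert ih₁) (.imp_intro lv.logic_of_GLHilbert ih₂)
  | weak hΓ hΔ _ ih => exact ih.mono (seqCtx_mono hΓ hΔ)
  | @impL c lv Γ Δ φ ψ _ _ ih₁ ih₂ =>
    rw [seqCtx_insert_right] at ih₁
    rw [seqCtx_insert_left] at ih₂ ⊢
    have hφ : HDer lv.logic (insert (φ.imp ψ) (seqCtx Γ Δ)) φ :=
      .of_not_not lv.logic_of_GLHilbert
        ((HDer.imp_intro lv.logic_of_GLHilbert ih₁).mono (Set.subset_insert _ _))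
    exact .mp ((HDer.imp_intro lv.logic_of_GLHilbert ih₂).mono (Set.subset_insert _ _))
      (.mp (.hyp (Set.mem_insert _ _)) hφ)
  | @impR c lv Γ Δ φ ψ _ ih =>
    rw [seqCtx_insert_left, seqCtx_insert_right, Set.insert_comm] at ih
    rw [seqCtx_insert_right]
    have himp : HDer lv.logic (seqCtx Γ Δ) (φ.imp ψ) :=
      .imp_intro lv.logic_of_GLHilbert
        (.of_not_not lv.logic_of_GLHilbert (.imp_intro lv.logic_of_GLHilbert ih))
    exact .mp (.hyp (Set.mem_insert _ _)) (himp.mono (Set.subset_insert _ _))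
  | boxGL _ ih => exact HDer.boxGL ih
  | @boxL c Γ Δ φ _ ih =>
    rw [seqCtx_insert_left] at ih ⊢
    exact .mp ((HDer.imp_intro (SeqLevel.logic_of_GLHilbert .two) ih).mono
        (Set.subset_insert _ _))
      (.mp (.ax (GLSHilbert.refl φ)) (.hyp (Set.mem_insert _ _)))
  | lift _ ih => exact ih.map_base fun _ => .gl

theorem GLSHilbert.of_GLSSeq {c : Bool} {φ : Formula} (h : GLSSeq c .two ∅ {φ}) : GLSHilbert φ := by
  have hbot := h.hDer_bot
  rw [show ({φ} : Finset Formula) = insert φ ∅ from rfl, seqCtx_insert_right,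
    show seqCtx ∅ ∅ = ∅ by simp [seqCtx]] at hbot
  exact (HDer.of_not_not (fun _ => .gl) (.imp_intro (fun _ => .gl) hbot)).base_of_empty
    GLSHilbert.mp

namespace GLModel

variable (M : GLModel)

theorem wellFounded_flip : WellFounded (flip M.R) :=
  wellFounded_iff_isEmpty_descending_chain.2 ⟨fun ⟨f, hf⟩ => M.cwf f hf⟩

theorem sat_of_GLHilbert {φ : Formula} (h : GLHilbert φ) (w : M.World) : M.sat w φ := by
  induction h generalizing w with
  | ax1 φ ψ => exact fun h _ => h
  | ax2 φ ψ χ => exact fun h₁ h₂ h₃ => h₁ h₃ (h₂ h₃)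
  | ax3 φ => exact fun h => by_contra fun h' => h h'
  | axK φ ψ => exact fun h₁ h₂ w' hw' => h₁ w' hw' (h₂ w' hw')
  | axLob φ =>
    intro hlob
    by_contra hbox
    simp only [KSat, not_forall] at hbox
    obtain ⟨u₀, hu₀, hfail₀⟩ := hbox
    -- an `R`-maximal successor of `w` refuting `φ` satisfies `□φ`, hence `φ`
    obtain ⟨u, ⟨hwu, hfail⟩, hmax⟩ :=
      M.wellFounded_flip.has_min {u | M.R w u ∧ ¬ KSat M.R M.val φ u} ⟨u₀, hu₀, hfail₀⟩
    refine hfail (hlob u hwu fun v huv => ?_)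
    by_contra hv
    exact hmax v ⟨M.trans hwu huv, hv⟩ huv
  | mp _ _ ih₁ ih₂ => exact ih₁ w (ih₂ w)
  | nec _ ih => exact fun w' _ => ih w'

variable {M} {f : ℕ → M.World}

theorem rel_of_descending (hf : ∀ i, M.R (f (i + 1)) (f i)) {i j : ℕ} (hij : i < j) :
    M.R (f j) (f i) := by
  induction j, hij using Nat.le_induction with
  | base => exact hf i
  | succ j _ ih => exact M.trans (hf j) ih

theorem finite_not_sat_of_GLSHilbert {φ : Formula} (h : GLSHilbert φ)
    (hf : ∀ i, M.R (f (i + 1)) (f i)) : {i | ¬ M.sat (f i) φ}.Finite := by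
  induction h with
  | gl h => simp [M.sat_of_GLHilbert h]
  | refl α =>
    refine Set.Subsingleton.finite fun i hi j hj => ?_
    simp only [Set.mem_ofPred_eq, GLModel.sat, KSat, Classical.not_imp] at hi hj
    by_contra hij
    rcases Nat.lt_or_gt_of_ne hij with hij | hij
    · exact hi.2 (hj.1 (f i) (rel_of_descending hf hij))
    · exact hj.2 (hi.1 (f j) (rel_of_descending hf hij))
  | mp _ _ ih₁ ih₂ =>
    refine (ih₁.union ih₂).subset fun i hi => ?_
    by_contra hi'
    simp only [Set.mem_union, Set.mem_ofPred_eq, not_or, not_not] at hi'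
    exact hi (hi'.1 hi'.2)

theorem exists_sat_of_GLSHilbert {φ : Formula} (h : GLSHilbert φ)
    (hf : ∀ i, M.R (f (i + 1)) (f i)) : ∃ i, M.sat (f i) φ := by
  obtain ⟨i, hi⟩ := (finite_not_sat_of_GLSHilbert h hf).infinite_compl.nonempty
  exact ⟨i, not_not.1 hi⟩

end GLModel

theorem Formula.mem_subf_self : ∀ φ : Formula, φ ∈ φ.subf
  | .var _ | .bot | .imp _ _ | .box _ => by simp [Formula.subf]

theorem Formula.subf_subset_of_mem : ∀ {θ ψ : Formula}, ψ ∈ θ.subf → ψ.subf ⊆ θ.subf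
  | .var _, _, h | .bot, _, h => by
    simp only [Formula.subf, Finset.mem_singleton] at h
    exact h ▸ subset_rfl
  | .imp a b, _, h => by
    simp only [Formula.subf, Finset.mem_insert, Finset.mem_union] at h
    rcases h with rfl | h | h
    · exact subset_rfl
    · exact (subf_subset_of_mem h).trans
        (Finset.subset_union_left.trans (Finset.subset_insert _ _))
    · exact (subf_subset_of_mem h).trans
        (Finset.subset_union_right.trans (Finset.subset_insert _ _))
  | .box a, _, h => by
    simp only [Formula.subf, Finset.mem_insert] at h
    rcases h with rfl | h
    · exact subset_rfl
    · exact (subf_subset_of_mem h).trans (Finset.subset_insert _ _)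

def SubfClosed (S : Finset Formula) : Prop := ∀ θ ∈ S, θ.subf ⊆ S

theorem subfClosed_SF (Ψ Φ : Finset Formula) : SubfClosed (SF Ψ Φ) := by
  intro θ hθ ψ hψ
  simp only [SF, Finset.mem_biUnion] at hθ ⊢
  obtain ⟨χ, hχ, hθχ⟩ := hθ
  exact ⟨χ, hχ, Formula.subf_subset_of_mem hθχ hψ⟩

namespace SubfClosed

variable {S : Finset Formula} {φ ψ : Formula}

theorem imp_left (hS : SubfClosed S) (h : φ.imp ψ ∈ S) : φ ∈ S :=
  hS _ h (by simp [Formula.subf, Formula.mem_subf_self])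

theorem imp_right (hS : SubfClosed S) (h : φ.imp ψ ∈ S) : ψ ∈ S :=
  hS _ h (by simp [Formula.subf, Formula.mem_subf_self])

theorem of_box (hS : SubfClosed S) (h : φ.box ∈ S) : φ ∈ S :=
  hS _ h (by simp [Formula.subf, Formula.mem_subf_self])

end SubfClosed

section Saturation

variable {lv : SeqLevel} {S Γ Δ : Finset Formula}

theorem GLSSeq.of_mem_of_mem {θ : Formula} (hΓ : θ ∈ Γ) (hΔ : θ ∈ Δ) : GLSSeq false lv Γ Δ :=
  .weak (Finset.singleton_subset_iff.2 hΓ) (Finset.singleton_subset_iff.2 hΔ) (.init false lv θ)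

theorem GLSSeq.of_bot_mem (h : Formula.bot ∈ Γ) : GLSSeq false lv Γ Δ :=
  .weak (Finset.singleton_subset_iff.2 h) (Finset.empty_subset _) (.initBot false lv)

theorem exists_maximal_unprovable {Γ₀ Δ₀ : Finset Formula} (hS : Γ₀ ∪ Δ₀ ⊆ S)
    (hnp : ¬ GLSSeq false lv Γ₀ Δ₀) :
    ∃ Γ Δ : Finset Formula, Γ₀ ⊆ Γ ∧ Δ₀ ⊆ Δ ∧ Γ ∪ Δ ⊆ S ∧ ¬ GLSSeq false lv Γ Δ ∧
      ∀ θ ∈ S, (θ ∉ Γ → GLSSeq false lv (insert θ Γ) Δ) ∧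
        (θ ∉ Δ → GLSSeq false lv Γ (insert θ Δ)) := by
  let T : Set (Finset Formula × Finset Formula) :=
    {p | Γ₀ ⊆ p.1 ∧ Δ₀ ⊆ p.2 ∧ p.1 ∪ p.2 ⊆ S ∧ ¬ GLSSeq false lv p.1 p.2}
  have hT : T.Finite := (Set.finite_Iic (S, S)).subset fun p hp =>
    ⟨Finset.union_subset_left hp.2.2.1, Finset.union_subset_right hp.2.2.1⟩
  obtain ⟨⟨Γ, Δ⟩, ⟨hΓ₀, hΔ₀, hΓΔ, hnp'⟩, hmax⟩ :=
    hT.exists_maximal ⟨(Γ₀, Δ₀), subset_rfl, subset_rfl, hS, hnp⟩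
  refine ⟨Γ, Δ, hΓ₀, hΔ₀, hΓΔ, hnp', fun θ hθ => ⟨fun hθΓ => ?_, fun hθΔ => ?_⟩⟩
  · by_contra h
    refine hθΓ ((hmax (y := (insert θ Γ, Δ)) ⟨hΓ₀.trans (Finset.subset_insert _ _), hΔ₀, ?_, h⟩
      ⟨Finset.subset_insert _ _, subset_rfl⟩).1 (Finset.mem_insert_self θ Γ))
    rw [Finset.insert_union]
    exact Finset.insert_subset hθ hΓΔ
  · by_contra h
    refine hθΔ ((hmax (y := (Γ, insert θ Δ)) ⟨hΓ₀, hΔ₀.trans (Finset.subset_insert _ _), ?_, h⟩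
      ⟨subset_rfl, Finset.subset_insert _ _⟩).2 (Finset.mem_insert_self θ Δ))
    rw [Finset.union_insert]
    exact Finset.insert_subset hθ hΓΔ

theorem saturated_of_maximal (hS : SubfClosed S) (hΓΔ : Γ ∪ Δ ⊆ S)
    (hnp : ¬ GLSSeq false lv Γ Δ)
    (hmax : ∀ θ ∈ S, (θ ∉ Γ → GLSSeq false lv (insert θ Γ) Δ) ∧
      (θ ∉ Δ → GLSSeq false lv Γ (insert θ Δ))) :
    Saturated lv Γ Δ := by
  have hΓ : Γ ⊆ S := Finset.union_subset_left hΓΔ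
  have hΔ : Δ ⊆ S := Finset.union_subset_right hΓΔ
  have impL : ∀ φ ψ, φ.imp ψ ∈ Γ → φ ∈ Δ ∨ ψ ∈ Γ := by
    intro φ ψ h
    by_contra! hc
    refine hnp (Finset.insert_eq_of_mem h ▸ .impL ?_ ?_)
    · exact (hmax φ (hS.imp_left (hΓ h))).2 hc.1
    · exact (hmax ψ (hS.imp_right (hΓ h))).1 hc.2
  have impR : ∀ φ ψ, φ.imp ψ ∈ Δ → φ ∈ Γ ∧ ψ ∈ Δ := by
    intro φ ψ h
    by_contra! hc
    refine hnp (Finset.insert_eq_of_mem h ▸ .impR ?_)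
    by_cases hφ : φ ∈ Γ
    · rw [Finset.insert_eq_of_mem hφ]
      exact (hmax ψ (hS.imp_right (hΔ h))).2 (hc hφ)
    · exact .weak subset_rfl (Finset.subset_insert _ _) ((hmax φ (hS.imp_left (hΔ h))).1 hφ)
  cases lv with
  | one => exact ⟨impL, impR⟩
  | two =>
    refine ⟨⟨impL, impR⟩, fun φ h => ?_⟩
    by_contra hφ
    exact hnp (Finset.insert_eq_of_mem h ▸ .boxL φ ((hmax φ (hS.of_box (hΓ h))).1 hφ))

theorem exists_saturated_unprovable {Γ₀ Δ₀ : Finset Formula} (hS : SubfClosed S)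
    (hΓΔ₀ : Γ₀ ∪ Δ₀ ⊆ S) (hnp : ¬ GLSSeq false lv Γ₀ Δ₀) :
    ∃ Γ Δ : Finset Formula, Γ₀ ⊆ Γ ∧ Δ₀ ⊆ Δ ∧ Γ ∪ Δ ⊆ S ∧
      Saturated lv Γ Δ ∧ ¬ GLSSeq false lv Γ Δ := by
  obtain ⟨Γ, Δ, hΓ₀, hΔ₀, hΓΔ, hnp', hmax⟩ := exists_maximal_unprovable hΓΔ₀ hnp
  exact ⟨Γ, Δ, hΓ₀, hΔ₀, hΓΔ, saturated_of_maximal hS hΓΔ hnp' hmax, hnp'⟩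

end Saturation

theorem KSat.of_labelling {W : Type} {R : W → W → Prop} {v : W → ℕ → Prop}
    (L : W → Finset Formula × Finset Formula) (hsat : ∀ w, Saturated1 (L w).1 (L w).2)
    (hdisj : ∀ w, Disjoint (L w).1 (L w).2) (hbot : ∀ w, Formula.bot ∉ (L w).1)
    (hv : ∀ w p, v w p ↔ Formula.var p ∈ (L w).1)
    (hfwd : ∀ w w' a, R w w' → a.box ∈ (L w).1 → a ∈ (L w').1)
    (hbwd : ∀ w a, a.box ∈ (L w).2 → ∃ w', R w w' ∧ a ∈ (L w').2) (ψ : Formula) (w : W) :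
    (ψ ∈ (L w).1 → KSat R v ψ w) ∧ (ψ ∈ (L w).2 → ¬ KSat R v ψ w) := by
  induction ψ generalizing w with
  | var p =>
    exact ⟨(hv w p).2, fun h hp => Finset.disjoint_left.1 (hdisj w) ((hv w p).1 hp) h⟩
  | bot => exact ⟨fun h => (hbot w h).elim, fun _ h => h⟩
  | imp a b iha ihb =>
    refine ⟨fun h ha => ?_, fun h hab => ?_⟩
    · rcases (hsat w).1 a b h with h | h
      · exact ((iha w).2 h ha).elim
      · exact (ihb w).1 h
    · obtain ⟨ha, hb⟩ := (hsat w).2 a b h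
      exact (ihb w).2 hb (hab ((iha w).1 ha))
  | box a iha =>
    refine ⟨fun h w' hw' => (iha w').1 (hfwd w w' a hw' h), fun h hbox => ?_⟩
    obtain ⟨w', hw', ha⟩ := hbwd w a h
    exact (iha w').2 ha (hbox w' hw')

@[simp] theorem mem_boxInv {ψ : Formula} {Θ : Finset Formula} : ψ ∈ boxInv Θ ↔ ψ.box ∈ Θ := by
  simp only [boxInv, Finset.mem_image, Finset.mem_filter]
  constructor
  · rintro ⟨(_ | _ | _ | χ), ⟨hχ, hbox⟩, rfl⟩ <;> simp_all [Formula.isBox, Formula.unbox]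
  · exact fun h => ⟨ψ.box, ⟨h, rfl⟩, rfl⟩

theorem boxInv_image_box_subset (Θ : Finset Formula) : (boxInv Θ).image .box ⊆ Θ := by
  intro ψ hψ
  obtain ⟨χ, hχ, rfl⟩ := Finset.mem_image.1 hψ
  exact mem_boxInv.1 hχ

section Canonical

variable {S : Finset Formula} {wp : W0 S}

theorem R0.trans {x y z : W0 S} (hxy : R0 S x y) (hyz : R0 S y z) : R0 S x z :=
  ⟨hxy.1.trans hyz.1, hxy.1.subset.trans hyz.2⟩

theorem W0.card_boxInv_le (x : W0 S) : (boxInv x.1.1).card ≤ (S.image Formula.unbox).card :=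
  Finset.card_le_card (Finset.image_subset_image
    ((Finset.filter_subset _ _).trans (Finset.union_subset_left x.2.2.2)))

/-- The successor saturates the premise of (□GL) with conclusion `□Θ ⇒ □a`. -/
theorem W0.exists_R0_of_box_mem_right (hS : SubfClosed S) (x : W0 S) {a : Formula}
    (h : a.box ∈ x.1.2) : ∃ y : W0 S, R0 S x y ∧ a ∈ y.1.2 := by
  classical
  set Θ := boxInv x.1.1
  have hnp : ¬ GLSSeq false .one (Θ ∪ Θ.image .box ∪ {a.box}) {a} := fun hp =>
    x.2.2.1 (.weak (boxInv_image_box_subset _) (Finset.singleton_subset_iff.2 h) (.boxGL hp))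
  have hboxΘ : Θ.image .box ⊆ S :=
    (boxInv_image_box_subset _).trans (Finset.union_subset_left x.2.2.2)
  have hΘ : Θ ⊆ S := fun θ hθ => hS.of_box (hboxΘ (Finset.mem_image_of_mem _ hθ))
  have ha : a.box ∈ S := x.2.2.2 (Finset.mem_union_right _ h)
  have hsub : Θ ∪ Θ.image .box ∪ {a.box} ∪ {a} ⊆ S := by
    simp only [Finset.union_subset_iff, Finset.singleton_subset_iff]
    exact ⟨⟨⟨hΘ, hboxΘ⟩, ha⟩, hS.of_box ha⟩
  obtain ⟨Γ, Δ, hΓ, hΔ, hΓΔ, hsat, hnp'⟩ := exists_saturated_unprovable hS hsub hnp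
  have hΘΓ : Θ ⊆ Γ := Finset.union_subset_left (Finset.union_subset_left hΓ)
  have hΘboxΓ : Θ ⊆ boxInv Γ := fun θ hθ => mem_boxInv.2 (hΓ (by simp [hθ]))
  have haΓ : a ∈ boxInv Γ := mem_boxInv.2 (hΓ (by simp))
  have haΘ : a ∉ Θ := fun haΘ => x.2.2.1 (.of_mem_of_mem (mem_boxInv.1 haΘ) h)
  exact ⟨⟨(Γ, Δ), hsat, hnp', hΓΔ⟩,
    ⟨(Finset.ssubset_iff_of_subset hΘboxΓ).2 ⟨a, haΓ, haΘ⟩, hΘΓ⟩, hΔ (by simp)⟩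

theorem Rext_trans {u v w : Wext S} (huv : Rext S wp u v) (hvw : Rext S wp v w) :
    Rext S wp u w :=
  match u, v, w, huv, hvw with
  | .inl _, .inl _, .inl _, huv, hvw => R0.trans huv hvw
  | .inl _, .inl _, .inr _, _, hvw => (hvw : False).elim
  | .inl _, .inr _, _, huv, _ => (huv : False).elim
  | .inr _, .inl _, .inl _, huv, hvw =>
    Or.inr (huv.elim (fun hy => hy ▸ hvw) fun hwy => R0.trans hwy hvw)
  | .inr _, .inl _, .inr _, _, hvw => (hvw : False).elim
  | .inr _, .inr _, .inl _, _, hvw => hvw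
  | .inr _, .inr _, .inr _, huv, hvw => Nat.lt_trans hvw huv

/-- A rank that strictly decreases along `Rext`: the copies of `wp` lie above all of `W0 S`,
and along `R0` the set `boxInv` strictly grows inside `S.image unbox`. -/
def Wext.rank (S : Finset Formula) : Wext S → ℕ
  | .inl x => (S.image Formula.unbox).card - (boxInv x.1.1).card
  | .inr n => (S.image Formula.unbox).card + 1 + n

theorem Wext.rank_lt_of_Rext {u v : Wext S} (h : Rext S wp u v) : rank S v < rank S u := by
  rcases u with x | n <;> rcases v with y | m
  · have hlt := Finset.card_lt_card (h : R0 S x y).1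
    have := y.card_boxInv_le
    simp only [rank]
    omega
  · exact (h : False).elim
  · simp only [rank]
    omega
  · have hmn : m < n := h
    simp only [rank]
    omega

def extModel (wp : W0 S) : GLModel where
  World := Wext S
  ne := ⟨.inr 0⟩
  R := Rext S wp
  trans _ _ _ := Rext_trans
  cwf f hf :=
    have hwf : WellFounded (flip (Rext S wp)) :=
      Subrelation.wf Wext.rank_lt_of_Rext (InvImage.wf (Wext.rank S) wellFounded_lt)
    (wellFounded_iff_isEmpty_descending_chain.1 hwf).false ⟨f, hf⟩
  val := Vext S wp

def Wext.label (wp : W0 S) : Wext S → W0 S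
  | .inl x => x
  | .inr _ => wp

theorem Rext.mem_of_box_mem (hwp : ∀ a, a.box ∈ wp.1.1 → a ∈ wp.1.1) {u v : Wext S}
    (huv : Rext S wp u v) {a : Formula} (ha : a.box ∈ (u.label wp).1.1) :
    a ∈ (v.label wp).1.1 := by
  rcases u with x | n <;> rcases v with y | m
  · exact (huv : R0 S x y).2 (mem_boxInv.2 ha)
  · exact (huv : False).elim
  · rcases (huv : y = wp ∨ R0 S wp y) with rfl | hwy
    · exact hwp a ha
    · exact hwy.2 (mem_boxInv.2 ha)
  · exact hwp a ha

theorem Wext.exists_Rext_of_box_mem_right (hS : SubfClosed S) (u : Wext S) {a : Formula}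
    (ha : a.box ∈ (u.label wp).1.2) : ∃ v, Rext S wp u v ∧ a ∈ (v.label wp).1.2 := by
  rcases u with x | n
  · obtain ⟨y, hxy, hy⟩ := x.exists_R0_of_box_mem_right hS ha
    exact ⟨.inl y, hxy, hy⟩
  · obtain ⟨y, hwy, hy⟩ := wp.exists_R0_of_box_mem_right hS ha
    exact ⟨.inl y, Or.inr hwy, hy⟩

theorem extModel_truth (hS : SubfClosed S) (hwp : ∀ a, a.box ∈ wp.1.1 → a ∈ wp.1.1)
    (ψ : Formula) (u : Wext S) :
    (ψ ∈ (u.label wp).1.1 → (extModel wp).sat u ψ) ∧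
      (ψ ∈ (u.label wp).1.2 → ¬ (extModel wp).sat u ψ) :=
  KSat.of_labelling (fun u => (u.label wp).1) (fun u => (u.label wp).2.1)
    (fun u => Finset.disjoint_left.2 fun _ h₁ h₂ => (u.label wp).2.2.1 (.of_mem_of_mem h₁ h₂))
    (fun u h => (u.label wp).2.2.1 (.of_bot_mem h))
    (fun u p => by cases u <;> rfl)
    (fun _ _ _ huv ha => Rext.mem_of_box_mem hwp huv ha)
    (fun u _ ha => u.exists_Rext_of_box_mem_right hS ha) ψ u

end Canonical

theorem exists_descending_not_sat {φ : Formula} (hφ : ¬ GLSHilbert φ) :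
    ∃ (M : GLModel) (f : ℕ → M.World), (∀ i, M.R (f (i + 1)) (f i)) ∧
      ∀ i, ¬ M.sat (f i) φ := by
  have hS := subfClosed_SF ∅ {φ}
  have hφS : (∅ : Finset Formula) ∪ {φ} ⊆ SF ∅ {φ} := by
    simpa [SF] using Formula.mem_subf_self φ
  obtain ⟨Γ, Δ, -, hΔ, hΓΔ, ⟨hsat, hbox⟩, hnp⟩ :=
    exists_saturated_unprovable (lv := .two) hS hφS fun h => hφ (GLSHilbert.of_GLSSeq h)
  let wp : W0 (SF ∅ {φ}) := ⟨(Γ, Δ), hsat, fun h => hnp (.lift h), hΓΔ⟩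
  exact ⟨extModel wp, .inr, fun i => Nat.lt_succ_self i, fun i =>
    (extModel_truth hS hbox φ (.inr i)).2 (hΔ (Finset.mem_singleton_self φ))⟩

/-- Characterization C4: φ is a theorem of GLS iff on every infinitely descending
sequence of every GL-model, φ is true somewhere. -/
theorem gls_characterization_c4 (φ : Formula) :
    GLSHilbert φ ↔
      ∀ (M : GLModel) (f : ℕ → M.World), (∀ i, M.R (f (i + 1)) (f i)) →
        ∃ i, M.sat (f i) φ := by
  refine ⟨fun h M f hf => GLModel.exists_sat_of_GLSHilbert h hf, fun H => ?_⟩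
  by_contra hφ
  obtain ⟨M, f, hf, hnot⟩ := exists_descending_not_sat hφ
  obtain ⟨i, hi⟩ := H M f hf
  exact hnot i hi
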